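/- arXiv:math/0512596 — 2 statements merged into one kernel-verified Lean document; each statement's English description precedes it below -/
import Mathlib

section
/- In a free graded Lie algebra L on a graded set of generators containing a generator τ, if w ∈ L is a Lie polynomial in the generators other than τ and [τ, w] = 0, then w = 0 (assuming the bidegree does not force [τ,w] to vanish for sign reasons, e.g. τ of odd degree and w not proportional to τ-free torsion; over a field of characteristic 0 with |τ| odd this centralizer condition forces w = 0). -/
/-!
Map the free Lie algebra into the free associative algebra `k[FreeMonoid X]` by `x ↦ x`.
A Lie element `w` in the generators other than `τ` becomes a combination of nonempty `τ`-free
words, and `[τ, w] = 0` says that it commutes with the letter `τ`; comparing the coefficients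
of `τ m` in `τ w` and `w τ` shows that it vanishes. The map is injective by the
Dynkin–Specht–Wever argument: right-normed bracketing of words turns it back into a derivation
of the free Lie algebra fixing the generators, i.e. multiplication by the degree, which is
injective in characteristic zero.
-/

attribute [local instance 100] LieRing.ofAssociativeRing

open MonoidAlgebra
open scoped Pointwise

namespace FreeLieAlgebra

variable (R : Type*) [CommRing R] {X : Type*}

theorem lieSpan_range_of :
    LieSubalgebra.lieSpan R (FreeLieAlgebra R X) (Set.range (of R)) = ⊤ := by
  set K := LieSubalgebra.lieSpan R (FreeLieAlgebra R X) (Set.range (of R))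
  let g : X → K := fun x => ⟨of R x, LieSubalgebra.subset_lieSpan ⟨x, rfl⟩⟩
  have hK : K.incl.comp (lift R g) = LieHom.id := hom_ext fun x => by simp [g]
  refine eq_top_iff.2 fun u _ => ?_
  rw [← LieHom.id_apply (R := R) u, ← hK]
  exact (lift R g u).2

@[elab_as_elim]
theorem induction_on {p : FreeLieAlgebra R X → Prop} (u : FreeLieAlgebra R X)
    (generator : ∀ x, p (of R x)) (zero : p 0) (add : ∀ a b, p a → p b → p (a + b))
    (smul : ∀ (r : R) a, p a → p (r • a)) (lie : ∀ a b, p a → p b → p ⁅a, b⁆) :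
    p u :=
  LieSubalgebra.lieSpan_induction R (p := fun u _ => p u)
    (by rintro _ ⟨x, rfl⟩; exact generator x) zero (fun a b _ _ => add a b)
    (fun r a _ => smul r a) (fun a b _ _ => lie a b)
    (lieSpan_range_of R ▸ LieSubalgebra.mem_top u)

end FreeLieAlgebra

namespace FreeMonoid

variable {X : Type*}

def nonemptyWordsOver (Y : Set X) : Set (FreeMonoid X) :=
  {l | l ≠ 1 ∧ ∀ x ∈ l.toList, x ∈ Y}

theorem nonemptyWordsOver_mul_subset (Y : Set X) :
    nonemptyWordsOver Y * nonemptyWordsOver Y ⊆ nonemptyWordsOver Y := by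
  rintro _ ⟨a, ⟨ha, haY⟩, b, ⟨-, hbY⟩, rfl⟩
  refine ⟨fun h => ha (mul_eq_one'.1 h).1, fun x hx => ?_⟩
  rw [toList_mul, List.mem_append] at hx
  exact hx.elim (haY x) (hbY x)

theorem univ_mul_setOf_ne_one_subset :
    Set.univ * {l | l ≠ 1} ⊆ {l : FreeMonoid X | l ≠ 1} := by
  rintro _ ⟨a, -, b, hb, rfl⟩ h
  exact hb (mul_eq_one'.1 h).2

theorem mul_of_ne_of_mul {τ : X} {m : FreeMonoid X} (hm : m ∈ nonemptyWordsOver {x | x ≠ τ})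
    (d : FreeMonoid X) : d * of τ ≠ of τ * m := by
  obtain ⟨hm1, hmτ⟩ := hm
  replace hm1 : m.toList ≠ [] := fun h => hm1 (toList.injective h)
  intro h
  replace h : d.toList ++ [τ] = τ :: m.toList := by simpa using congrArg toList h
  obtain ⟨l, a, hl⟩ := (List.eq_nil_or_concat' m.toList).resolve_left hm1
  rw [hl, ← List.cons_append] at h
  obtain rfl : τ = a := by simpa using (List.append_inj' h rfl).2
  exact hmτ τ (by simp [hl]) rfl

end FreeMonoid

namespace MonoidAlgebra

variable {R M : Type*} [Semiring R]

theorem mul_mem_supported [Mul M] {s t u : Set M} (hst : s * t ⊆ u) {f g : R[M]}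
    (hf : f ∈ supported R R s) (hg : g ∈ supported R R t) : f * g ∈ supported R R u := by
  classical
  rw [mem_supported] at *
  refine (Finset.coe_subset.2 (support_coeff_mul_subset f g)).trans ?_
  rw [Finset.coe_mul]
  exact (Set.mul_subset_mul hf hg).trans hst

theorem eq_zero_of_commute_single_of_mem_supported {X : Type*} {τ : X} {f : R[FreeMonoid X]}
    (hf : f ∈ supported R R (FreeMonoid.nonemptyWordsOver {x | x ≠ τ}))
    (hτ : Commute (single (FreeMonoid.of τ) 1) f) : f = 0 := by
  ext m
  by_cases hm : m ∈ FreeMonoid.nonemptyWordsOver {x | x ≠ τ}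
  · calc f.coeff m = (single (FreeMonoid.of τ) 1 * f).coeff (FreeMonoid.of τ * m) := by
          rw [coeff_single_mul_mul, one_mul]
      _ = 0 := by
        rw [hτ.eq]
        exact coeff_mul_single_of_forall_mul_ne _ _ (FreeMonoid.mul_of_ne_of_mul hm)
  · exact mem_supported'.1 hf m hm

end MonoidAlgebra

namespace FreeLieAlgebra

variable (R : Type*) [CommRing R] (X : Type*)

noncomputable def toMonoidAlgebra : FreeLieAlgebra R X →ₗ⁅R⁆ R[FreeMonoid X] :=
  lift R fun x => single (FreeMonoid.of x) 1

noncomputable def dynkinBracket : List X → FreeLieAlgebra R X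
  | [] => 0
  | [x] => of R x
  | x :: y :: l => ⁅of R x, dynkinBracket (y :: l)⁆

noncomputable def dynkinMap : R[FreeMonoid X] →ₗ[R] FreeLieAlgebra R X :=
  Finsupp.linearCombination R (fun l => dynkinBracket R X l.toList) ∘ₗ
    (coeffLinearEquiv R).toLinearMap

variable {R X}

@[simp]
theorem toMonoidAlgebra_of (x : X) :
    toMonoidAlgebra R X (of R x) = single (FreeMonoid.of x) 1 :=
  lift_of_apply _ x

theorem toMonoidAlgebra_lie (a b : FreeLieAlgebra R X) :
    toMonoidAlgebra R X ⁅a, b⁆ =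
      toMonoidAlgebra R X a * toMonoidAlgebra R X b -
        toMonoidAlgebra R X b * toMonoidAlgebra R X a := by
  rw [LieHom.map_lie, Ring.lie_def]

theorem toMonoidAlgebra_mem_supported {Y : Set X} {u : FreeLieAlgebra R X}
    (hu : u ∈ LieSubalgebra.lieSpan R (FreeLieAlgebra R X) (of R '' Y)) :
    toMonoidAlgebra R X u ∈ supported R R (FreeMonoid.nonemptyWordsOver Y) := by
  induction hu using LieSubalgebra.lieSpan_induction with
  | mem _ hx =>
    obtain ⟨x, hx, rfl⟩ := hx
    rw [toMonoidAlgebra_of]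
    exact Finsupp.single_mem_supported R (1 : R) ⟨FreeMonoid.of_ne_one x, by simpa using hx⟩
  | zero => simp
  | add _ _ _ _ ha hb => simpa using add_mem ha hb
  | smul r _ _ ha => simpa using Submodule.smul_mem _ r ha
  | lie _ _ _ _ ha hb =>
    have hS := FreeMonoid.nonemptyWordsOver_mul_subset Y
    rw [toMonoidAlgebra_lie]
    exact sub_mem (mul_mem_supported hS ha hb) (mul_mem_supported hS hb ha)

theorem toMonoidAlgebra_mem_supported_ne_one (u : FreeLieAlgebra R X) :
    toMonoidAlgebra R X u ∈ supported R R {l | l ≠ 1} := by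
  have hu : u ∈ LieSubalgebra.lieSpan R (FreeLieAlgebra R X) (of R '' Set.univ) := by
    rw [Set.image_univ, lieSpan_range_of]
    exact LieSubalgebra.mem_top u
  exact supported_mono (fun _ hl => hl.1) (toMonoidAlgebra_mem_supported hu)

@[simp]
theorem dynkinMap_single (l : FreeMonoid X) (c : R) :
    dynkinMap R X (single l c) = c • dynkinBracket R X l.toList :=
  Finsupp.linearCombination_single R _ _

theorem dynkinMap_single_of_mul (y : X) (f : R[FreeMonoid X]) :
    dynkinMap R X (single (FreeMonoid.of y) 1 * f) =
      ⁅of R y, dynkinMap R X f⁆ + f.coeff 1 • of R y := by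
  induction f using MonoidAlgebra.induction_linear with
  | zero => simp
  | add f g hf hg =>
    rw [mul_add, map_add, hf, hg, map_add, lie_add, coeff_add, Finsupp.add_apply, add_smul]
    abel
  | single l c =>
    rw [single_mul_single, one_mul, dynkinMap_single, dynkinMap_single, coeff_single]
    rcases hl : l.toList with _ | ⟨z, m⟩
    · obtain rfl : l = 1 := FreeMonoid.toList.injective hl
      simp [dynkinBracket]
    · have hl1 : l ≠ 1 := by rintro rfl; simp at hl
      rw [FreeMonoid.toList_of_mul, hl, Finsupp.single_eq_of_ne' hl1, zero_smul, add_zero,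
        dynkinBracket, lie_smul]

theorem dynkinMap_toMonoidAlgebra_mul (u : FreeLieAlgebra R X) {f : R[FreeMonoid X]}
    (hf : f ∈ supported R R {l | l ≠ 1}) :
    dynkinMap R X (toMonoidAlgebra R X u * f) = ⁅u, dynkinMap R X f⁆ := by
  induction u using induction_on generalizing f with
  | generator y =>
    rw [toMonoidAlgebra_of, dynkinMap_single_of_mul, mem_supported'.1 hf 1 (by simp),
      zero_smul, add_zero]
  | zero => simp
  | add a b ha hb => rw [map_add, add_mul, map_add, ha hf, hb hf, add_lie]
  | smul r a ha => rw [map_smul, smul_mul_assoc, map_smul, ha hf, smul_lie]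
  | lie a b ha hb =>
    have hmul (g : R[FreeMonoid X]) : g * f ∈ supported R R {l | l ≠ 1} :=
      mul_mem_supported FreeMonoid.univ_mul_setOf_ne_one_subset (Set.subset_univ _) hf
    rw [toMonoidAlgebra_lie, sub_mul, mul_assoc, mul_assoc, map_sub, ha (hmul _), hb (hmul _),
      ha hf, hb hf, lie_lie]

variable (R X) in
noncomputable def eulerDerivation :
    LieDerivation R (FreeLieAlgebra R X) (FreeLieAlgebra R X) where
  toLinearMap :=
    dynkinMap R X ∘ₗ (toMonoidAlgebra R X : FreeLieAlgebra R X →ₗ[R] R[FreeMonoid X])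
  leibniz' a b := by
    simp only [LinearMap.comp_apply, LieHom.coe_toLinearMap, toMonoidAlgebra_lie, map_sub]
    rw [dynkinMap_toMonoidAlgebra_mul a (toMonoidAlgebra_mem_supported_ne_one b),
      dynkinMap_toMonoidAlgebra_mul b (toMonoidAlgebra_mem_supported_ne_one a)]

@[simp]
theorem eulerDerivation_of (x : X) : eulerDerivation R X (of R x) = of R x := by
  simp [eulerDerivation, dynkinBracket]

theorem mem_iSup_eigenspace_of_lieDerivation
    (N : LieDerivation R (FreeLieAlgebra R X) (FreeLieAlgebra R X))
    (hN : ∀ x, N (of R x) = of R x) (u : FreeLieAlgebra R X) :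
    u ∈ ⨆ n : ℕ,
      Module.End.eigenspace (N : Module.End R (FreeLieAlgebra R X)) ((n + 1 : ℕ) : R) := by
  set T := ⨆ n : ℕ,
    Module.End.eigenspace (N : Module.End R (FreeLieAlgebra R X)) ((n + 1 : ℕ) : R)
  induction u using induction_on with
  | generator x => exact Submodule.mem_iSup_of_mem 0 (by simp [hN])
  | zero => exact T.zero_mem
  | add a b ha hb => exact T.add_mem ha hb
  | smul r a ha => exact T.smul_mem r ha
  | lie a b ha hb =>
    induction ha using Submodule.iSup_induction' with
    | mem m a ha =>
      induction hb using Submodule.iSup_induction' with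
      | mem n b hb =>
        refine Submodule.mem_iSup_of_mem (m + n + 1) ?_
        rw [Module.End.mem_eigenspace_iff, LieDerivation.coeFn_coe] at ha hb ⊢
        rw [LieDerivation.apply_lie_eq_add, ha, hb, lie_smul, smul_lie, ← add_smul]
        congr 1
        push_cast
        ring
      | zero => simp
      | add b c _ _ hb hc => rw [lie_add]; exact T.add_mem hb hc
    | zero => simp
    | add a c _ _ ha hc => rw [add_lie]; exact T.add_mem ha hc

end FreeLieAlgebra

namespace FreeLieAlgebra

variable {k X : Type*} [Field k] [CharZero k]

theorem injective_of_lieDerivation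
    (N : LieDerivation k (FreeLieAlgebra k X) (FreeLieAlgebra k X))
    (hN : ∀ x, N (of k x) = of k x) : Function.Injective N := by
  set E : Module.End k (FreeLieAlgebra k X) := N.toLinearMap
  rw [← LieDerivation.coeFn_coe, ← LinearMap.ker_eq_bot, Submodule.eq_bot_iff]
  intro u hu
  have hpos :
      (⨆ n : ℕ, E.eigenspace ((n + 1 : ℕ) : k)) ≤ ⨆ (μ : k) (_ : μ ≠ 0), E.eigenspace μ :=
    iSup_le fun n => le_iSup₂_of_le _ (Nat.cast_ne_zero.2 n.succ_ne_zero) le_rfl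
  have h0 : u ∈ E.eigenspace 0 := by
    rw [Module.End.mem_eigenspace_iff, zero_smul]
    exact hu
  exact Submodule.disjoint_def.1 (E.eigenspaces_iSupIndep 0) u h0
    (hpos (mem_iSup_eigenspace_of_lieDerivation N hN u))

variable (k X) in
theorem toMonoidAlgebra_injective : Function.Injective (toMonoidAlgebra k X) :=
  fun _ _ h => injective_of_lieDerivation (eulerDerivation k X) eulerDerivation_of
    (congrArg (dynkinMap k X) h)

end FreeLieAlgebra

/-- In a free Lie algebra on a set of generators containing `τ`, if `w` is a
Lie element in the generators other than `τ` (i.e. lies in the Lie subalgebra generated by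
them) and `[τ, w] = 0`, then `w = 0`: the adjoint action of the free generator `τ` is
injective on the Lie subalgebra generated by the remaining generators. -/
theorem stmt11 (k : Type*) [Field k] [CharZero k] (X : Type*) (τ : X)
    (w : FreeLieAlgebra k X)
    (hw : w ∈ LieSubalgebra.lieSpan k (FreeLieAlgebra k X)
        (FreeLieAlgebra.of k '' {x : X | x ≠ τ}))
    (h : ⁅FreeLieAlgebra.of k τ, w⁆ = 0) : w = 0 := by
  open FreeLieAlgebra in
  refine toMonoidAlgebra_injective k X ?_
  rw [map_zero]
  refine eq_zero_of_commute_single_of_mem_supported (toMonoidAlgebra_mem_supported hw) ?_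
  have hcomm := congrArg (toMonoidAlgebra k X) h
  rwa [toMonoidAlgebra_lie, map_zero, toMonoidAlgebra_of, sub_eq_zero] at hcomm
end

section
/- With notation as above, if m_+ is a degree -1 continuous derivation of T̂V with m_+² = 0, extended to T̂(V ⊕ kτ) by m_+(τ) = 0, then m := m_+ + ad(τ) - τ²∂_τ satisfies m² = 0. -/
/-- With notation as in Statement 12 (`A` the tensor algebra on `V ⊕ k·τ`,
parity automorphism `s`, `Algebra.adjoin k S` playing the role of the τ-free part `T̂V`),
if `mplus` is an odd square-zero derivation of `T̂V` (extended by `mplus τ = 0`) and `m0`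
is the derivation `ad(τ) - τ²∂_τ` (so `m0 τ = τ²` and `m0 a = τ·a - s(a)·τ` on τ-free
elements), then `m := mplus + m0` satisfies `m² = 0` on the subalgebra generated
by `τ` and `S`. -/
theorem stmt13 (k A : Type*) [Field k] [CharZero k] [Ring A] [Algebra k A]
    (S : Set A) (τ : A) (s : A →ₐ[k] A) (mplus m0 : A →ₗ[k] A)
    (hs2 : ∀ a, s (s a) = a) (hsτ : s τ = -τ)
    (hsS : ∀ a ∈ Algebra.adjoin k S, s a ∈ Algebra.adjoin k S)
    (hleibp : ∀ a b : A, mplus (a * b) = mplus a * b + s a * mplus b)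
    (hleib0 : ∀ a b : A, m0 (a * b) = m0 a * b + s a * m0 b)
    (hmsp : ∀ a, mplus (s a) = - s (mplus a))
    (hms0 : ∀ a, m0 (s a) = - s (m0 a))
    (hpτ : mplus τ = 0)
    (hpB : ∀ a ∈ Algebra.adjoin k S, mplus a ∈ Algebra.adjoin k S)
    (hpsq : ∀ a, mplus (mplus a) = 0)
    (h0τ : m0 τ = τ * τ)
    (h0free : ∀ a ∈ Algebra.adjoin k S, m0 a = τ * a - s a * τ) :
    ∀ a ∈ Algebra.adjoin k (insert τ S), (mplus + m0) ((mplus + m0) a) = 0 := by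
  set m : A →ₗ[k] A := mplus + m0 with hmdef
  have hmapp : ∀ x, m x = mplus x + m0 x := fun x => rfl
  have hleib : ∀ a b : A, m (a * b) = m a * b + s a * m b := by
    intro a b
    simp only [hmapp, hleibp, hleib0]
    noncomm_ring
  have hms : ∀ a, m (s a) = - s (m a) := by
    intro a
    simp only [hmapp, hmsp, hms0, map_add]
    abel
  have hm1 : m 1 = 0 := by
    have h := hleib 1 1
    simp only [mul_one, one_mul, map_one] at h
    exact add_eq_right.mp h.symm
  have hmτ : m τ = τ * τ := by rw [hmapp, hpτ, h0τ, zero_add]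
  have hkey : ∀ a b : A, m (m (a * b)) = m (m a) * b + a * m (m b) := by
    intro a b
    rw [hleib, map_add, hleib, hleib, hms, hs2]
    noncomm_ring
  have hDτ : m (m τ) = 0 := by
    rw [hmτ, hleib, hmτ, hsτ]
    noncomm_ring
  have hmem : ∀ a ∈ Algebra.adjoin k S, m (m a) = 0 := by
    intro a ha
    have hpa := hpB a ha
    have hsa := hsS a ha
    have e1 : m a = mplus a + (τ * a - s a * τ) := by rw [hmapp, h0free a ha]
    have e2 : m (mplus a) = τ * mplus a - s (mplus a) * τ := by
      rw [hmapp, hpsq, h0free _ hpa, zero_add]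
    have e3 : m (s a) = - s (mplus a) + (τ * s a - a * τ) := by
      rw [hmapp, hmsp, h0free _ hsa, hs2]
    rw [e1, map_add, map_sub, e2, hleib, hleib, hmτ, hsτ, hs2, e3, e1]
    noncomm_ring
  intro a ha
  induction ha using Algebra.adjoin_induction with
  | mem x hx =>
      rcases hx with rfl | hx
      · exact hDτ
      · exact hmem x (Algebra.subset_adjoin hx)
  | algebraMap r =>
      rw [Algebra.algebraMap_eq_smul_one, map_smul, hm1, smul_zero, map_zero]
  | add x y hx hy ihx ihy => rw [map_add, map_add, ihx, ihy, add_zero]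
  | mul x y hx hy ihx ihy => rw [hkey, ihx, ihy, zero_mul, mul_zero, add_zero]
end
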